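/- A completely positive trace-preserving qubit map whose set of fixed density matrices is exactly two-dimensional does not exist: if a CPTP map on 2×2 matrices fixes 1, σ_y, σ_z (i.e., Λ(σ_z) = σ_z, Λ(σ_y) = σ_y, Λ(1) = 1, Λ(σ_x) = aσ_x + bσ_y + cσ_z), then complete positivity forces a = 1, b = c = 0, i.e., Λ is the identity map. -/

import Mathlib

open Matrix BigOperators ComplexOrder

noncomputable def sigmaX : Matrix (Fin 2) (Fin 2) ℂ := !![0, 1; 1, 0]
noncomputable def sigmaY : Matrix (Fin 2) (Fin 2) ℂ := !![0, -Complex.I; Complex.I, 0]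
noncomputable def sigmaZ : Matrix (Fin 2) (Fin 2) ℂ := !![1, 0; 0, -1]

/-- The trace-preserving, Hermiticity-preserving qubit map with `Λ(1) = 1`,
`Λ(σ_y) = σ_y`, `Λ(σ_z) = σ_z`, `Λ(σ_x) = aσ_x + bσ_y + cσ_z`, written via the
Pauli decomposition. -/
noncomputable def lambdaABC (a b c : ℝ) (M : Matrix (Fin 2) (Fin 2) ℂ) :
    Matrix (Fin 2) (Fin 2) ℂ :=
  (M.trace / 2) • (1 : Matrix (Fin 2) (Fin 2) ℂ)
    + ((sigmaX * M).trace / 2) • ((a : ℂ) • sigmaX + (b : ℂ) • sigmaY + (c : ℂ) • sigmaZ)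
    + ((sigmaY * M).trace / 2) • sigmaY
    + ((sigmaZ * M).trace / 2) • sigmaZ

noncomputable def choi (f : Matrix (Fin 2) (Fin 2) ℂ → Matrix (Fin 2) (Fin 2) ℂ) :
    Matrix (Fin 2 × Fin 2) (Fin 2 × Fin 2) ℂ :=
  Matrix.of fun p q => f (Matrix.single p.1 q.1 1) p.2 q.2

/-!
Since `Λ` maps `E₀₀ = (1 + σ_z)/2` to itself, the Choi matrix has a vanishing diagonal entry
at index `(0, 1)`, namely `Λ(E₀₀)₁₁`. In a positive semidefinite matrix a zero diagonal entry
forces its whole column to vanish, and that column contains the entries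
`Λ(E₁₀)₀₁ = (a - i b - 1)/2` and `Λ(E₁₀)₁₁ = -c/2`.
-/

theorem Matrix.PosSemidef.apply_eq_zero_of_diag_eq_zero {n 𝕜 : Type*} [Fintype n] [RCLike 𝕜]
    {A : Matrix n n 𝕜} (hA : A.PosSemidef) {i : n} (hi : A i i = 0) (j : n) : A j i = 0 := by
  classical
  have hcol : A *ᵥ Pi.single i 1 = 0 :=
    (hA.dotProduct_mulVec_zero_iff _).mp (by simpa [mulVec_single_one] using hi)
  simpa [mulVec_single_one] using congrFun hcol j

lemma lambdaABC_single_zero_zero (a b c : ℝ) :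
    lambdaABC a b c (single 0 0 1) = single 0 0 1 := by
  simp only [lambdaABC, trace_mul_single]
  ext i j
  fin_cases i <;> fin_cases j <;> simp [sigmaX, sigmaY, sigmaZ]; ring

lemma lambdaABC_single_one_zero (a b c : ℝ) :
    lambdaABC a b c (single 1 0 1) =
      (1 / 2 : ℂ) • !![(c : ℂ), a - b * Complex.I - 1; a + b * Complex.I + 1, -c] := by
  simp only [lambdaABC, trace_mul_single]
  ext i j
  fin_cases i <;> fin_cases j <;> simp [sigmaX, sigmaY, sigmaZ, Complex.ext_iff] <;> ring

/-- A CPTP qubit map fixing `1, σ_y, σ_z` must be the identity: complete positivity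
(positive semidefiniteness of the Choi matrix) forces `a = 1`, `b = 0`, `c = 0`.
In particular no CPTP qubit map has a fixed-point set of density matrices of
dimension exactly two. -/
theorem no_two_dimensional_fixed_point_set (a b c : ℝ)
    (hCP : (choi (lambdaABC a b c)).PosSemidef) :
    a = 1 ∧ b = 0 ∧ c = 0 := by
  have hdiag : choi (lambdaABC a b c) (0, 1) (0, 1) = 0 := by
    simp [choi, lambdaABC_single_zero_zero]
  have hab := hCP.apply_eq_zero_of_diag_eq_zero hdiag (1, 0)
  have hc := hCP.apply_eq_zero_of_diag_eq_zero hdiag (1, 1)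
  simp [choi, lambdaABC_single_one_zero, Complex.ext_iff] at hab hc
  exact ⟨by linarith [hab.1], hab.2, hc⟩
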